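/- Let n ≥ 1 and let T : ℝⁿ → ℝⁿ be monotone and additively homogeneous. Then the following are equivalent: (a) there is no pair (I, J) of disjoint subsets of {1,…,n} such that I is a MIN-dominion for T and J is a MAX-dominion for T; (b) every uniform perturbation G of T has an additive eigenvector, i.e., for every monotone additively homogeneous map G : ℝⁿ → ℝⁿ with sup_{x ∈ ℝⁿ} ‖G(x) − T(x)‖_H < ∞ there exist λ ∈ ℝ and u ∈ ℝⁿ with G(u) = λ·e + u. -/

import Mathlib

/-- `T` is additively homogeneous: `T(x + c·e) = T(x) + c·e`. -/
def AddHomog (n : ℕ) (T : (Fin n → ℝ) → (Fin n → ℝ)) : Prop :=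
  ∀ (x : Fin n → ℝ) (c : ℝ), T (fun i => x i + c) = fun i => T x i + c

/-- `Δ` is a MIN-dominion for `T`: there is `β` with `T_i(t·e_{Δᶜ}) ≤ β`
for all `i ∈ Δ` and all `t ≥ 0`. -/
def MinDominion (n : ℕ) (T : (Fin n → ℝ) → (Fin n → ℝ)) (Δ : Set (Fin n)) : Prop :=
  Δ.Nonempty ∧ ∃ β : ℝ, ∀ i ∈ Δ, ∀ t : ℝ, 0 ≤ t →
    T (Δᶜ.indicator fun _ => t) i ≤ β

/-- `Δ` is a MAX-dominion for `T`: there is `α` with `T_i(−t·e_{Δᶜ}) ≥ α`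
for all `i ∈ Δ` and all `t ≥ 0`. -/
def MaxDominion (n : ℕ) (T : (Fin n → ℝ) → (Fin n → ℝ)) (Δ : Set (Fin n)) : Prop :=
  Δ.Nonempty ∧ ∃ α : ℝ, ∀ i ∈ Δ, ∀ t : ℝ, 0 ≤ t →
    α ≤ T (Δᶜ.indicator fun _ => -t) i

/-- Hilbert's seminorm `‖x‖_H = max_i x_i − min_i x_i`. -/
noncomputable def hilbertSeminorm (n : ℕ) (x : Fin n → ℝ) : ℝ :=
  (⨆ i, x i) - ⨅ i, x i

/-- The additive slice space `A_α^β(T) = {x : α·e + x ≤ T(x) ≤ β·e + x}`. -/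
def addSliceSpace (n : ℕ) (T : (Fin n → ℝ) → (Fin n → ℝ)) (α β : ℝ) : Set (Fin n → ℝ) :=
  {x | ∀ i, α + x i ≤ T x i ∧ T x i ≤ β + x i}

/-!
(a) ⇒ (b). Let `G` be a uniform perturbation of `T`. Each slice space `A_α^β(G)` lies in a
slice space of `T`. If a slice space of `T` is unbounded in Hilbert's seminorm, take a sequence
`Y_k` in it with `‖Y_k‖_H → ∞`, measure every coordinate from the minimum and from the maximum of
`Y_k`, and pass to a subsequence along which each of these distances either stays bounded or
tends to `+∞`. The coordinates that stay near the minimum form a MIN-dominion, those that stay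
near the maximum a MAX-dominion, and no coordinate is near both since `‖Y_k‖_H → ∞`. Hence, in
the absence of such a pair, the slice space `A_α^β(G)` with `α = min G(0)`, `β = max G(0)` is
bounded. An eigenvector is then obtained by the vanishing-discount method: for `ρ < 1` the map
`x ↦ G(ρx)` is a sup-norm contraction, its fixed point `v_ρ` has `ρ v_ρ ∈ A_α^β(G)`, so the
normalised `v_ρ` stay in a compact set, and a limit point as `ρ → 1` is an eigenvector.

(b) ⇒ (a). For a MIN-dominion `I` and every `u`, some `i ∈ I` has `T(u)_i ≤ β + u_i`; dually for
a MAX-dominion `J`. So if `I` and `J` are disjoint, adding `-s` on `I` and `+s` on `J` to `T`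
for large `s` leaves no room for an eigenvalue.
-/

open Filter Topology

section MonotoneAddHomog

variable {n : ℕ} {T : (Fin n → ℝ) → (Fin n → ℝ)}

theorem AddHomog.map_sub_const (hhom : AddHomog n T) (x : Fin n → ℝ) (c : ℝ) :
    T (fun i => x i - c) = fun i => T x i - c := by
  simpa only [← sub_eq_add_neg] using hhom x (-c)

theorem AddHomog.map_le_add (hhom : AddHomog n T) (hmono : Monotone T) {x y : Fin n → ℝ}
    {c : ℝ} (h : ∀ i, x i ≤ y i + c) (i : Fin n) : T x i ≤ T y i + c := by
  simpa [hhom y c] using hmono (show x ≤ fun j => y j + c from h) i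

theorem AddHomog.map_apply_le_iSup_add (hhom : AddHomog n T) (hmono : Monotone T)
    {x : Fin n → ℝ} {i : Fin n} (hi : ∀ j, x j ≤ x i) : T x i ≤ (⨆ j, T 0 j) + x i := by
  have h := hhom.map_le_add hmono (y := 0) (c := x i) (by simpa using hi) i
  linarith [le_ciSup (Set.finite_range (T 0)).bddAbove i]

theorem AddHomog.iInf_add_le_map_apply (hhom : AddHomog n T) (hmono : Monotone T)
    {x : Fin n → ℝ} {i : Fin n} (hi : ∀ j, x i ≤ x j) : (⨅ j, T 0 j) + x i ≤ T x i := by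
  have h := hmono (show (fun j => (0 : Fin n → ℝ) j + x i) ≤ x from fun j => by simpa using hi j) i
  rw [hhom 0 (x i)] at h
  linarith [ciInf_le (Set.finite_range (T 0)).bddBelow i]

theorem AddHomog.lipschitzWith_one (hhom : AddHomog n T) (hmono : Monotone T) :
    LipschitzWith 1 T := by
  refine LipschitzWith.of_dist_le_mul fun x y => ?_
  rw [NNReal.coe_one, one_mul, dist_pi_le_iff dist_nonneg]
  have hxy : ∀ j, x j ≤ y j + dist x y ∧ y j ≤ x j + dist x y := fun j => by
    have := dist_le_pi_dist x y j
    rw [Real.dist_eq, abs_sub_le_iff] at this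
    constructor <;> linarith
  intro i
  rw [Real.dist_eq, abs_sub_le_iff]
  constructor
  · linarith [hhom.map_le_add hmono (fun j => (hxy j).1) i]
  · linarith [hhom.map_le_add hmono (fun j => (hxy j).2) i]

theorem exists_map_smul_eq_self (hhom : AddHomog n T) (hmono : Monotone T) {ρ : ℝ} (h0 : 0 ≤ ρ)
    (h1 : ρ < 1) : ∃ v, T (ρ • v) = v := by
  have hf : ContractingWith ⟨ρ, h0⟩ fun v => T (ρ • v) := by
    refine ⟨h1, LipschitzWith.of_dist_le_mul fun x y => ?_⟩
    calc dist (T (ρ • x)) (T (ρ • y)) ≤ dist (ρ • x) (ρ • y) := by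
          simpa using (hhom.lipschitzWith_one hmono).dist_le_mul (ρ • x) (ρ • y)
      _ = ρ * dist x y := by rw [dist_smul₀, Real.norm_of_nonneg h0]
  exact ⟨_, hf.fixedPoint_isFixedPt⟩

end MonotoneAddHomog

theorem sub_le_hilbertSeminorm {n : ℕ} (x : Fin n → ℝ) (i j : Fin n) :
    x i - x j ≤ hilbertSeminorm n x :=
  sub_le_sub (le_ciSup (Set.finite_range x).bddAbove i) (ciInf_le (Set.finite_range x).bddBelow j)

section Dominions

variable {n : ℕ} {T : (Fin n → ℝ) → (Fin n → ℝ)}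

def negConj (T : (Fin n → ℝ) → (Fin n → ℝ)) : (Fin n → ℝ) → (Fin n → ℝ) := fun x => -T (-x)

theorem Monotone.negConj (hmono : Monotone T) : Monotone (negConj T) :=
  fun _ _ h => neg_le_neg (hmono (neg_le_neg h))

theorem AddHomog.negConj (hhom : AddHomog n T) : AddHomog n (negConj T) := by
  intro x c
  have h : (-fun i => x i + c) = fun i => (-x) i - c := by
    funext i; simp only [Pi.neg_apply]; ring
  funext i
  show -T (-fun i => x i + c) i = -T (-x) i + c
  rw [h, hhom.map_sub_const]
  ring

theorem minDominion_negConj_iff {J : Set (Fin n)} :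
    MinDominion n (negConj T) J ↔ MaxDominion n T J := by
  have hind : ∀ t : ℝ, -(Jᶜ.indicator fun _ => t) = Jᶜ.indicator fun _ => -t := fun t => by
    funext i; by_cases hi : i ∈ Jᶜ <;> simp [hi]
  simp only [MinDominion, MaxDominion, negConj, hind, Pi.neg_apply, neg_le]
  constructor <;> rintro ⟨hne, c, hc⟩ <;> exact ⟨hne, -c, by simpa using hc⟩

theorem MinDominion.exists_le {I : Set (Fin n)} (hI : MinDominion n T I) (hhom : AddHomog n T)
    (hmono : Monotone T) : ∃ β, ∀ u, ∃ i ∈ I, T u i ≤ β + u i := by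
  obtain ⟨hne, β, hβ⟩ := hI
  have : Nonempty (Fin n) := ⟨hne.some⟩
  refine ⟨β, fun u => ?_⟩
  obtain ⟨i, hi, himax⟩ := I.exists_max_image u I.toFinite hne
  obtain ⟨j, hj⟩ := Finite.exists_max u
  have hle : ∀ k, u k ≤ (Iᶜ.indicator fun _ => u j - u i) k + u i := by
    intro k
    by_cases hk : k ∈ I
    · simp [hk, himax k hk]
    · simp [hk, hj k]
  refine ⟨i, hi, ?_⟩
  calc T u i ≤ T (Iᶜ.indicator fun _ => u j - u i) i + u i := hhom.map_le_add hmono hle i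
    _ ≤ β + u i := by linarith [hβ i hi (u j - u i) (by linarith [hj i])]

theorem MaxDominion.exists_ge {J : Set (Fin n)} (hJ : MaxDominion n T J) (hhom : AddHomog n T)
    (hmono : Monotone T) : ∃ α, ∀ u, ∃ j ∈ J, α + u j ≤ T u j := by
  obtain ⟨β, hβ⟩ := (minDominion_negConj_iff.mpr hJ).exists_le hhom.negConj hmono.negConj
  refine ⟨-β, fun u => ?_⟩
  obtain ⟨j, hj, h⟩ := hβ (-u)
  refine ⟨j, hj, ?_⟩
  simp only [negConj, neg_neg, Pi.neg_apply] at h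
  linarith

theorem exists_uniformPerturbation_without_eigenvector (hhom : AddHomog n T)
    (hmono : Monotone T) {I J : Set (Fin n)} (hIJ : Disjoint I J) (hI : MinDominion n T I)
    (hJ : MaxDominion n T J) :
    ∃ G : (Fin n → ℝ) → (Fin n → ℝ), Monotone G ∧ AddHomog n G ∧
      (∃ M : ℝ, ∀ x, hilbertSeminorm n (G x - T x) ≤ M) ∧
      ¬ ∃ (lam : ℝ) (u : Fin n → ℝ), G u = fun i => lam + u i := by
  classical
  obtain ⟨β, hβ⟩ := hI.exists_le hhom hmono
  obtain ⟨α, hα⟩ := hJ.exists_ge hhom hmono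
  obtain ⟨s, hs⟩ := exists_gt ((β - α) / 2)
  set w : Fin n → ℝ := fun i => if i ∈ J then s else -s
  refine ⟨fun x => T x + w, hmono.add_const w, fun x c => ?_,
    ⟨hilbertSeminorm n w, fun x => by simp⟩, ?_⟩
  · funext i
    simp only [hhom x c, Pi.add_apply]
    ring
  · rintro ⟨lam, u, hu⟩
    obtain ⟨i, hiI, hi⟩ := hβ u
    obtain ⟨j, hjJ, hj⟩ := hα u
    have hui := congrFun hu i
    have huj := congrFun hu j
    simp only [Pi.add_apply, w, Set.disjoint_left.mp hIJ hiI, hjJ, if_true, if_false] at hui huj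
    linarith

end Dominions

theorem exists_subseq_eventually_le_or_tendsto_atTop {ι : Type*} [Finite ι] (s : ℕ → ι → ℝ) :
    ∃ φ : ℕ → ℕ, StrictMono φ ∧ ∃ C : ℝ, ∀ i,
      (∀ᶠ k in atTop, s (φ k) i ≤ C) ∨ Tendsto (fun k => s (φ k) i) atTop atTop := by
  obtain ⟨a, -, φ, hφ, hlim⟩ :=
    isCompact_univ.tendsto_subseq (x := fun k i => (s k i : EReal)) fun _ => Set.mem_univ _
  have hcoord : ∀ i, ∃ C : ℝ,
      (∀ᶠ k in atTop, s (φ k) i ≤ C) ∨ Tendsto (fun k => s (φ k) i) atTop atTop := by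
    intro i
    have hi : Tendsto (fun k => (s (φ k) i : EReal)) atTop (𝓝 (a i)) := tendsto_pi_nhds.mp hlim i
    rcases (le_top : a i ≤ ⊤).lt_or_eq with h | h
    · obtain ⟨C, hC, -⟩ := EReal.exists_between_coe_real h
      exact ⟨C, .inl ((hi.eventually_lt_const hC).mono fun k hk => (EReal.coe_lt_coe_iff.mp hk).le)⟩
    · refine ⟨0, .inr (tendsto_atTop.mpr fun t => ?_)⟩
      have ht : (t : EReal) < a i := h ▸ EReal.coe_lt_top t
      exact (hi.eventually_const_lt ht).mono fun k hk => (EReal.coe_lt_coe_iff.mp hk).le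
  choose C hC using hcoord
  obtain ⟨C₀, hC₀⟩ := Finite.exists_le C
  exact ⟨φ, hφ, C₀, fun i => (hC i).imp_left fun h => h.mono fun k hk => hk.trans (hC₀ i)⟩

section Unbounded

variable {n : ℕ} {T : (Fin n → ℝ) → (Fin n → ℝ)}

theorem minDominion_of_tendsto (hmono : Monotone T) {x : ℕ → Fin n → ℝ} {I : Set (Fin n)}
    {b C : ℝ} (hT : ∀ k i, T (x k) i ≤ b + x k i) (hnonneg : ∀ k i, 0 ≤ x k i)
    (hzero : ∀ k, ∃ i, x k i = 0) (hbdd : ∀ i ∈ I, ∀ᶠ k in atTop, x k i ≤ C)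
    (htop : ∀ i ∉ I, Tendsto (fun k => x k i) atTop atTop) : MinDominion n T I := by
  have hlarge : ∀ t, ∀ᶠ k in atTop, ∀ i, (i ∈ I → x k i ≤ C) ∧ (i ∉ I → t ≤ x k i) := by
    intro t
    rw [eventually_all]
    intro i
    by_cases hi : i ∈ I
    · exact (hbdd i hi).mono fun k hk => ⟨fun _ => hk, fun h => absurd hi h⟩
    · exact ((htop i hi).eventually_ge_atTop t).mono fun k hk => ⟨fun h => absurd h hi, fun _ => hk⟩
  refine ⟨?_, b + C, fun i hi t ht => ?_⟩
  · obtain ⟨k, hk⟩ := (hlarge 1).exists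
    obtain ⟨i, hi⟩ := hzero k
    exact ⟨i, by_contra fun h => by linarith [(hk i).2 h]⟩
  · obtain ⟨k, hk⟩ := (hlarge t).exists
    have hle : Iᶜ.indicator (fun _ => t) ≤ x k := fun j => by
      by_cases hj : j ∈ I
      · simp [hj, hnonneg k j]
      · simp [hj, (hk j).2 hj]
    calc T (Iᶜ.indicator fun _ => t) i ≤ T (x k) i := hmono hle i
      _ ≤ b + x k i := hT k i
      _ ≤ b + C := by linarith [(hk i).1 hi]

theorem exists_disjoint_dominions_of_not_bddAbove [Nonempty (Fin n)] (hhom : AddHomog n T)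
    (hmono : Monotone T) {a b : ℝ}
    (h : ¬ BddAbove (hilbertSeminorm n '' addSliceSpace n T a b)) :
    ∃ I J : Set (Fin n), Disjoint I J ∧ MinDominion n T I ∧ MaxDominion n T J := by
  have hY : ∀ k : ℕ, ∃ Y ∈ addSliceSpace n T a b, (k : ℝ) < hilbertSeminorm n Y := fun k => by
    obtain ⟨_, ⟨Y, hY, rfl⟩, hk⟩ := not_bddAbove_iff.mp h k
    exact ⟨Y, hY, hk⟩
  choose Y hYA hYk using hY
  set x : ℕ → Fin n → ℝ := fun k i => Y k i - ⨅ j, Y k j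
  set y : ℕ → Fin n → ℝ := fun k i => (⨆ j, Y k j) - Y k i
  have hx_nonneg : ∀ k i, 0 ≤ x k i := fun k i =>
    sub_nonneg.2 (ciInf_le (Set.finite_range _).bddBelow i)
  have hy_nonneg : ∀ k i, 0 ≤ y k i := fun k i =>
    sub_nonneg.2 (le_ciSup (Set.finite_range _).bddAbove i)
  have hx_zero : ∀ k, ∃ i, x k i = 0 := fun k =>
    exists_eq_ciInf_of_finite.imp fun _ hi => sub_eq_zero.2 hi
  have hy_zero : ∀ k, ∃ i, y k i = 0 := fun k =>
    exists_eq_ciSup_of_finite.imp fun _ hi => sub_eq_zero.2 hi.symm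
  have hxT : ∀ k i, T (x k) i ≤ b + x k i := fun k i => by
    simp only [x, hhom.map_sub_const]
    linarith [(hYA k i).2]
  have hyT : ∀ k i, negConj T (y k) i ≤ -a + y k i := fun k i => by
    have hneg : -(y k) = fun i => Y k i - ⨆ j, Y k j := by
      funext i; simp [y]
    simp only [negConj, hneg, hhom.map_sub_const, Pi.neg_apply, y]
    linarith [(hYA k i).1]
  obtain ⟨φ, hφ, C, hC⟩ :=
    exists_subseq_eventually_le_or_tendsto_atTop fun k => Sum.elim (x k) (y k)
  refine ⟨{i | ∀ᶠ k in atTop, x (φ k) i ≤ C}, {i | ∀ᶠ k in atTop, y (φ k) i ≤ C}, ?_,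
    minDominion_of_tendsto hmono (fun k => hxT (φ k)) (fun k => hx_nonneg (φ k))
      (fun k => hx_zero (φ k)) (fun _ hi => hi) (fun i hi => (hC (.inl i)).resolve_left hi),
    minDominion_negConj_iff.mp (minDominion_of_tendsto hmono.negConj (fun k => hyT (φ k))
      (fun k => hy_nonneg (φ k)) (fun k => hy_zero (φ k)) (fun _ hi => hi)
      (fun i hi => (hC (.inr i)).resolve_left hi))⟩
  rw [Set.disjoint_left]
  intro i hxi hyi
  have hlarge : ∀ᶠ k in atTop, 2 * C < φ k :=
    (tendsto_natCast_atTop_atTop.comp hφ.tendsto_atTop).eventually_gt_atTop _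
  obtain ⟨k, hxk, hyk, hk⟩ := (hxi.and (hyi.and hlarge)).exists
  have hxy : x (φ k) i + y (φ k) i = hilbertSeminorm n (Y (φ k)) := by
    simp only [x, y, hilbertSeminorm]; ring
  linarith [hYk (φ k)]

end Unbounded

section Eigenvector

variable {n : ℕ} [Nonempty (Fin n)] {T : (Fin n → ℝ) → (Fin n → ℝ)}

theorem addSliceSpace_subset_of_perturbation (hhom : AddHomog n T) (hmono : Monotone T)
    {G : (Fin n → ℝ) → (Fin n → ℝ)} {M : ℝ} (hM : ∀ x, hilbertSeminorm n (G x - T x) ≤ M)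
    (α β : ℝ) :
    addSliceSpace n G α β ⊆
      addSliceSpace n T ((⨅ i, T 0 i) - (β - α + M)) ((⨆ i, T 0 i) + (β - α + M)) := by
  intro x hx i
  obtain ⟨i₀, hi₀⟩ := Finite.exists_min x
  obtain ⟨i₁, hi₁⟩ := Finite.exists_max x
  have hd : ∀ j k, (G x j - T x j) - (G x k - T x k) ≤ M := fun j k =>
    (sub_le_hilbertSeminorm (G x - T x) j k).trans (hM x)
  have h₀ := hhom.iInf_add_le_map_apply hmono hi₀
  have h₁ := hhom.map_apply_le_iSup_add hmono hi₁
  constructor <;> linarith [hx i, hx i₀, hx i₁, hd i i₀, hd i₁ i]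

theorem smul_mem_addSliceSpace_of_map_smul_eq_self (hhom : AddHomog n T) (hmono : Monotone T)
    {ρ : ℝ} (h0 : 0 ≤ ρ) (h1 : ρ ≤ 1) {v : Fin n → ℝ} (hv : T (ρ • v) = v) :
    ρ • v ∈ addSliceSpace n T (⨅ i, T 0 i) (⨆ i, T 0 i) := by
  obtain ⟨i₀, hi₀⟩ := Finite.exists_min v
  obtain ⟨i₁, hi₁⟩ := Finite.exists_max v
  have h₀ := hhom.iInf_add_le_map_apply hmono (x := ρ • v) (i := i₀) fun j =>
    mul_le_mul_of_nonneg_left (hi₀ j) h0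
  have h₁ := hhom.map_apply_le_iSup_add hmono (x := ρ • v) (i := i₁) fun j =>
    mul_le_mul_of_nonneg_left (hi₁ j) h0
  intro i
  have hlo := mul_le_mul_of_nonneg_left (hi₀ i) (sub_nonneg.2 h1)
  have hhi := mul_le_mul_of_nonneg_left (hi₁ i) (sub_nonneg.2 h1)
  simp only [hv, Pi.smul_apply, smul_eq_mul] at h₀ h₁ ⊢
  constructor <;> linarith

theorem exists_discounted_eigenvector (hhom : AddHomog n T) (hmono : Monotone T) {R : ℝ}
    (hR : R ∈ upperBounds (hilbertSeminorm n '' addSliceSpace n T (⨅ i, T 0 i) (⨆ i, T 0 i)))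
    {ρ : ℝ} (h0 : 1 / 2 ≤ ρ) (h1 : ρ < 1) :
    ∃ w ∈ Set.Icc (0 : Fin n → ℝ) fun _ => 2 * R, ∃ lam ∈ Set.Icc (⨅ i, T 0 i) (⨆ i, T 0 i),
      T (ρ • w) = fun i => lam + w i := by
  obtain ⟨v, hv⟩ := exists_map_smul_eq_self hhom hmono (by linarith) h1
  obtain ⟨i₀, hi₀⟩ := Finite.exists_min v
  have hslice := smul_mem_addSliceSpace_of_map_smul_eq_self hhom hmono (by linarith) h1.le hv
  refine ⟨fun i => v i - v i₀, ⟨fun i => sub_nonneg.2 (hi₀ i), fun i => ?_⟩,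
    (1 - ρ) * v i₀, ?_, ?_⟩
  · have := (sub_le_hilbertSeminorm _ i i₀).trans (hR ⟨_, hslice, rfl⟩)
    simp only [Pi.smul_apply, smul_eq_mul] at this
    nlinarith [hi₀ i]
  · have := hslice i₀
    simp only [hv, Pi.smul_apply, smul_eq_mul] at this
    constructor <;> linarith
  · have hshift : (ρ • fun i => v i - v i₀) = fun i => (ρ • v) i - ρ * v i₀ := by
      funext i; simp only [Pi.smul_apply, smul_eq_mul]; ring
    rw [hshift, hhom.map_sub_const, hv]
    funext i; ring

theorem exists_eigenvector_of_bddAbove (hhom : AddHomog n T) (hmono : Monotone T)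
    (hbdd : BddAbove (hilbertSeminorm n '' addSliceSpace n T (⨅ i, T 0 i) (⨆ i, T 0 i))) :
    ∃ (lam : ℝ) (u : Fin n → ℝ), T u = fun i => lam + u i := by
  obtain ⟨R, hR⟩ := hbdd
  set ρ : ℕ → ℝ := fun k => 1 - 1 / 2 * (1 / ((k : ℝ) + 1))
  have hρ : ∀ k, 1 / 2 ≤ ρ k ∧ ρ k < 1 := fun k => by
    have : 0 < 1 / ((k : ℝ) + 1) := by positivity
    have : 1 / ((k : ℝ) + 1) ≤ 1 :=
      div_le_one_of_le₀ (by linarith [k.cast_nonneg (α := ℝ)]) (by positivity)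
    constructor <;> simp only [ρ] <;> linarith
  have hρ_lim : Tendsto ρ atTop (𝓝 1) := by
    have := (tendsto_one_div_add_atTop_nhds_zero_nat.const_mul (1 / 2 : ℝ)).const_sub (1 : ℝ)
    rwa [mul_zero, sub_zero] at this
  choose w hw lam hlam heq using fun k =>
    exists_discounted_eigenvector hhom hmono hR (hρ k).1 (hρ k).2
  obtain ⟨⟨u, l⟩, -, φ, hφ, hlim⟩ :=
    (isCompact_Icc.prod isCompact_Icc).tendsto_subseq fun k => Set.mk_mem_prod (hw k) (hlam k)
  have hw_lim : Tendsto (fun k => w (φ k)) atTop (𝓝 u) := hlim.fst_nhds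
  have hlam_lim : Tendsto (fun k => lam (φ k)) atTop (𝓝 l) := hlim.snd_nhds
  refine ⟨l, u, tendsto_nhds_unique (f := fun k => T (ρ (φ k) • w (φ k))) (l := atTop) ?_ ?_⟩
  · have := (hρ_lim.comp hφ.tendsto_atTop).smul hw_lim
    rw [one_smul] at this
    exact ((hhom.lipschitzWith_one hmono).continuous.tendsto u).comp this
  · simp only [heq]
    exact tendsto_pi_nhds.mpr fun i => hlam_lim.add ((continuous_apply i).tendsto _ |>.comp hw_lim)

end Eigenvector

theorem stmt5 (n : ℕ) (hn : 1 ≤ n)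
    (T : (Fin n → ℝ) → (Fin n → ℝ))
    (hmono : Monotone T) (hhom : AddHomog n T) :
    (¬ ∃ I J : Set (Fin n),
        Disjoint I J ∧ MinDominion n T I ∧ MaxDominion n T J) ↔
    (∀ G : (Fin n → ℝ) → (Fin n → ℝ), Monotone G → AddHomog n G →
        (∃ M : ℝ, ∀ x : Fin n → ℝ, hilbertSeminorm n (G x - T x) ≤ M) →
        ∃ (lam : ℝ) (u : Fin n → ℝ), G u = fun i => lam + u i) := by
  have : Nonempty (Fin n) := ⟨⟨0, hn⟩⟩
  constructor
  · rintro hnone G hGmono hGhom ⟨M, hM⟩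
    refine exists_eigenvector_of_bddAbove hGhom hGmono (BddAbove.mono
      (Set.image_mono (addSliceSpace_subset_of_perturbation hhom hmono hM _ _)) ?_)
    by_contra hunbdd
    exact hnone (exists_disjoint_dominions_of_not_bddAbove hhom hmono hunbdd)
  · rintro hall ⟨I, J, hIJ, hI, hJ⟩
    obtain ⟨G, hGmono, hGhom, hGT, hnoeig⟩ :=
      exists_uniformPerturbation_without_eigenvector hhom hmono hIJ hI hJ
    exact hnoeig (hall G hGmono hGhom hGT)
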